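/- For any positive integers q, n and any integer b, |VT_{0,q}(n)| ≥ |VT_{b,q}(n)|, i.e., the q-ary Varshamov–Tenengolts code is largest when the syndrome b is 0. Moreover |VT_{0,q}(n)| = (1/(q(n+1))) ∑_{d ∣ n+1, gcd(d,q)=1} φ(d)·q^{(n+1)/d}. -/

import Mathlib

open Complex Finset

/-- The q-ary Varshamov--Tenengolts code `VT_{b,q}(n)`. -/
def VTq (q n : ℕ) (b : ℤ) : Finset (Fin n → Fin q) :=
  Finset.univ.filter fun s =>
    ((n : ℤ) + 1) ∣ (∑ i : Fin n, ((i.val + 1) * (s i).val : ℕ) : ℤ) - b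

private lemma pow_mod_eq' {u : ℂ} {k : ℕ} (hu : u ^ k = 1) {a b : ℕ} (h : a ≡ b [MOD k]) :
    u ^ a = u ^ b := by
  rw [← Nat.div_add_mod a k, ← Nat.div_add_mod b k, pow_add, pow_add, pow_mul, pow_mul, hu,
    one_pow, one_pow]
  rw [show a % k = b % k from h]

private lemma periodic_prod' (F : ℕ → ℂ) (d : ℕ) (hF : ∀ a, F (a + d) = F a) (g : ℕ) :
    ∏ i ∈ Finset.range (d * g), F i = (∏ i ∈ Finset.range d, F i) ^ g := by
  have hshift : ∀ t a, F (a + d * t) = F a := by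
    intro t
    induction t with
    | zero => simp
    | succ k ih => intro a; rw [Nat.mul_succ, ← Nat.add_assoc, hF, ih]
  induction g with
  | zero => simp
  | succ k ih =>
    rw [Nat.mul_succ, Finset.prod_range_add, ih, pow_succ]
    congr 1
    refine Finset.prod_congr rfl fun i _ => ?_
    rw [add_comm, hshift k i]

private lemma mulmod_inv' {m : ℕ} (hm : 1 < m) {a b : ℕ} (hab : a * b % m = 1) :
    ∀ x < m, a * (b * x % m) % m = x := by
  intro x hx
  have h1 : a * (b * x % m) ≡ a * b * x [MOD m] := by
    calc a * (b * x % m) ≡ a * (b * x) [MOD m] := (Nat.mod_modEq (b * x) m).mul_left a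
      _ = a * b * x := by ring
  have h2 : a * b * x ≡ 1 * x [MOD m] :=
    Nat.ModEq.mul_right x (show a * b ≡ 1 [MOD m] by
      show a * b % m = 1 % m
      rw [hab, Nat.mod_eq_of_lt hm])
  have h3 := h1.trans h2
  calc a * (b * x % m) % m = (1 * x) % m := h3
    _ = x := by rw [one_mul, Nat.mod_eq_of_lt hx]

private lemma prod_range_mulmod' (m w : ℕ) (hw : Nat.Coprime w m) (F : ℕ → ℂ) :
    ∏ i ∈ Finset.range m, F (w * i % m) = ∏ i ∈ Finset.range m, F i := by
  rcases le_or_gt m 1 with hm | hm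
  · interval_cases m
    · simp
    · simp
  · obtain ⟨v, -, hv⟩ := Nat.exists_mul_mod_eq_one_of_coprime hw hm
    have hv' : v * w % m = 1 := by rwa [mul_comm] at hv
    refine Finset.prod_nbij' (fun x => w * x % m) (fun x => v * x % m) ?_ ?_ ?_ ?_ ?_
    · intro a ha; exact Finset.mem_range.2 (Nat.mod_lt _ (by omega))
    · intro a ha; exact Finset.mem_range.2 (Nat.mod_lt _ (by omega))
    · intro a ha; exact mulmod_inv' hm hv' a (Finset.mem_range.1 ha)
    · intro a ha; exact mulmod_inv' hm hv a (Finset.mem_range.1 ha)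
    · intro a ha; rfl

private lemma prod_H' (q d : ℕ) (hd : 0 < d) (η : ℂ) (hη : IsPrimitiveRoot η d) :
    ∏ i ∈ Finset.range d, (∑ s ∈ Finset.range q, (η ^ i) ^ s) =
      if Nat.gcd d q = 1 then (q : ℂ) else 0 := by
  have hηd : η ^ d = 1 := hη.pow_eq_one
  by_cases hcop : Nat.gcd d q = 1
  · rw [if_pos hcop]
    rcases eq_or_lt_of_le (show 1 ≤ d from hd) with hd1 | hd1
    · rw [← hd1]
      simp
    · -- 1 < d
      set Φ : ℕ → ℂ := fun i => ∑ s ∈ Finset.range q, (η ^ i) ^ s with hΦ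
      have hsplit : ∏ i ∈ Finset.range d, Φ i = Φ 0 * ∏ i ∈ Finset.Ico 1 d, Φ i := by
        rw [Finset.range_eq_Ico, Finset.prod_eq_prod_Ico_succ_bot hd, zero_add]
      have h0 : Φ 0 = (q : ℂ) := by simp [hΦ]
      rw [hsplit, h0]
      simp only [hΦ]
      have hne1 : ∀ i ∈ Finset.Ico 1 d, (η ^ i) ≠ 1 := fun i hi =>
        hη.pow_ne_one_of_pos_of_lt (by have := (Finset.mem_Ico.1 hi).1; omega) (Finset.mem_Ico.1 hi).2
      have hgeom : ∀ i ∈ Finset.Ico 1 d, (∑ s ∈ Finset.range q, (η ^ i) ^ s)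
          = ((η ^ i) ^ q - 1) / ((η ^ i) - 1) := fun i hi => geom_sum_eq (hne1 i hi) q
      rw [Finset.prod_congr rfl hgeom, Finset.prod_div_distrib]
      have hcop' : Nat.Coprime q d := (Nat.coprime_comm.1 hcop)
      obtain ⟨v, -, hv⟩ := Nat.exists_mul_mod_eq_one_of_coprime hcop' hd1
      have hv' : v * q % d = 1 := by rwa [mul_comm] at hv
      have hmem : ∀ i ∈ Finset.Ico 1 d, q * i % d ∈ Finset.Ico 1 d := by
        intro i hi
        obtain ⟨hi1, hi2⟩ := Finset.mem_Ico.1 hi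
        refine Finset.mem_Ico.2 ⟨?_, Nat.mod_lt _ hd⟩
        rcases Nat.eq_zero_or_pos (q * i % d) with h | h
        · exfalso
          have hdvd : d ∣ q * i := Nat.dvd_of_mod_eq_zero h
          have : d ∣ i := (Nat.Coprime.dvd_of_dvd_mul_left (Nat.coprime_comm.1 hcop') hdvd)
          have := Nat.le_of_dvd (by omega) this
          omega
        · exact h
      have hmem' : ∀ i ∈ Finset.Ico 1 d, v * i % d ∈ Finset.Ico 1 d := by
        intro i hi
        obtain ⟨hi1, hi2⟩ := Finset.mem_Ico.1 hi
        refine Finset.mem_Ico.2 ⟨?_, Nat.mod_lt _ hd⟩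
        rcases Nat.eq_zero_or_pos (v * i % d) with h | h
        · exfalso
          have h4 : q * (v * i % d) % d = i := mulmod_inv' hd1 hv i hi2
          rw [h, Nat.mul_zero, Nat.zero_mod] at h4
          omega
        · exact h
      have hnum : ∏ i ∈ Finset.Ico 1 d, ((η ^ i) ^ q - 1) = ∏ i ∈ Finset.Ico 1 d, (η ^ i - 1) := by
        refine Finset.prod_nbij' (fun i => q * i % d) (fun i => v * i % d) hmem hmem' ?_ ?_ ?_
        · intro a ha; exact mulmod_inv' hd1 hv' a (Finset.mem_Ico.1 ha).2
        · intro a ha; exact mulmod_inv' hd1 hv a (Finset.mem_Ico.1 ha).2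
        · intro a ha
          congr 1
          rw [← pow_mul, mul_comm a q]
          exact (pow_mod_eq' hηd (Nat.mod_modEq (q * a) d)).symm
      rw [hnum, div_self, mul_one]
      exact Finset.prod_ne_zero_iff.2 fun i hi => sub_ne_zero.2 (hne1 i hi)
  · rw [if_neg hcop]
    obtain ⟨g', hg'⟩ : ∃ g', g' = Nat.gcd d q := ⟨_, rfl⟩
    have hg'd : g' ∣ d := hg' ▸ Nat.gcd_dvd_left d q
    have hg'q : g' ∣ q := hg' ▸ Nat.gcd_dvd_right d q
    have hg'0 : 0 < g' := hg' ▸ Nat.gcd_pos_of_pos_left q hd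
    have hg'1 : 1 < g' := by omega
    obtain ⟨i₀, hi₀⟩ : ∃ i₀, i₀ = d / g' := ⟨_, rfl⟩
    have hi₀0 : 0 < i₀ := hi₀ ▸ Nat.div_pos (Nat.le_of_dvd hd hg'd) hg'0
    have hi₀d : i₀ < d := hi₀ ▸ Nat.div_lt_self hd hg'1
    refine Finset.prod_eq_zero (Finset.mem_range.2 hi₀d) ?_
    have hne : η ^ i₀ ≠ 1 := hη.pow_ne_one_of_pos_of_lt hi₀0.ne' hi₀d
    have hpow : (η ^ i₀) ^ q = 1 := by
      rw [← pow_mul]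
      have : i₀ * q = d * (q / g') := by
        obtain ⟨q', rfl⟩ := hg'q
        rw [hi₀, Nat.mul_div_cancel_left q' hg'0]
        calc d / g' * (g' * q') = (d / g' * g') * q' := by ring
          _ = d * q' := by rw [Nat.div_mul_cancel hg'd]
      rw [this, pow_mul, hηd, one_pow]
    rw [geom_sum_eq hne, hpow, sub_self, zero_div]

private lemma prod_G' (q m : ℕ) (hm : 0 < m) (ζ : ℂ) (hζ : IsPrimitiveRoot ζ m) (j : ℕ) :
    ∏ i ∈ Finset.range m, (∑ s ∈ Finset.range q, (ζ ^ (j * i)) ^ s) =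
      ((if Nat.gcd (m / Nat.gcd j m) q = 1 then q ^ Nat.gcd j m else 0 : ℕ) : ℂ) := by
  have hζm : ζ ^ m = 1 := hζ.pow_eq_one
  obtain ⟨g, hgdef⟩ : ∃ g, g = Nat.gcd j m := ⟨_, rfl⟩
  have hg0 : 0 < g := hgdef ▸ Nat.gcd_pos_of_pos_right j hm
  have hgm : g ∣ m := hgdef ▸ Nat.gcd_dvd_right j m
  have hgj : g ∣ j := hgdef ▸ Nat.gcd_dvd_left j m
  obtain ⟨d, hddef⟩ : ∃ d, d = m / g := ⟨_, rfl⟩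
  have hd0 : 0 < d := hddef ▸ Nat.div_pos (Nat.le_of_dvd hm hgm) hg0
  have hmdg : m = g * d := by rw [hddef, Nat.mul_div_cancel' hgm]
  have hu : Nat.Coprime (j / g) d := by
    rw [hddef, hgdef]; exact Nat.coprime_div_gcd_div_gcd (hgdef ▸ hg0)
  haveI : NeZero m := ⟨hm.ne'⟩
  obtain ⟨W, hW⟩ := ZMod.unitsMap_surjective (show d ∣ m from ⟨g, by rw [hmdg, mul_comm]⟩)
      (ZMod.unitOfCoprime (j / g) hu)
  have hw1 : Nat.Coprime ((W : ZMod m).val) m := ZMod.val_coe_unit_coprime W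
  have hw2 : (W : ZMod m).val ≡ j / g [MOD d] := by
    have h1 := congrArg (Units.val) hW
    rw [ZMod.unitsMap_def] at h1
    simp only [Units.coe_map, MonoidHom.coe_coe, ZMod.coe_unitOfCoprime] at h1
    have h2 : (((W : ZMod m).val : ℕ) : ZMod d) = ((j / g : ℕ) : ZMod d) := by
      rw [← h1, ZMod.castHom_apply, ZMod.natCast_val]
    exact (ZMod.natCast_eq_natCast_iff _ _ _).1 h2
  set w := (W : ZMod m).val with hwdef
  have hjw : j ≡ g * w [MOD m] := by
    have h0 : g * (j / g) = j := Nat.mul_div_cancel' hgj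
    have h1 : g * (j / g) ≡ g * w [MOD g * d] := Nat.ModEq.mul_left' g hw2.symm
    rw [h0, ← hmdg] at h1
    exact h1
  have Gmod : ∀ a b : ℕ, a ≡ b [MOD m] →
      (∑ s ∈ Finset.range q, (ζ ^ a) ^ s) = ∑ s ∈ Finset.range q, (ζ ^ b) ^ s :=
    fun a b h => by rw [pow_mod_eq' hζm h]
  have step1 : ∏ i ∈ Finset.range m, (∑ s ∈ Finset.range q, (ζ ^ (j * i)) ^ s)
      = ∏ i ∈ Finset.range m, (∑ s ∈ Finset.range q, (ζ ^ (g * (w * i))) ^ s) :=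
    Finset.prod_congr rfl fun i _ => Gmod _ _ (by rw [← mul_assoc]; exact hjw.mul_right i)
  have step2 : ∏ i ∈ Finset.range m, (∑ s ∈ Finset.range q, (ζ ^ (g * (w * i))) ^ s)
      = ∏ i ∈ Finset.range m, (∑ s ∈ Finset.range q, (ζ ^ (g * i)) ^ s) := by
    have h1 : ∀ i : ℕ, (∑ s ∈ Finset.range q, (ζ ^ (g * (w * i))) ^ s)
        = ∑ s ∈ Finset.range q, (ζ ^ (g * (w * i % m))) ^ s :=
      fun i => Gmod _ _ ((Nat.mod_modEq (w * i) m).mul_left g).symm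
    calc ∏ i ∈ Finset.range m, (∑ s ∈ Finset.range q, (ζ ^ (g * (w * i))) ^ s)
        = ∏ i ∈ Finset.range m, (∑ s ∈ Finset.range q, (ζ ^ (g * (w * i % m))) ^ s) :=
          Finset.prod_congr rfl fun i _ => h1 i
      _ = ∏ i ∈ Finset.range m, (∑ s ∈ Finset.range q, (ζ ^ (g * i)) ^ s) :=
          prod_range_mulmod' m w hw1 (fun a => ∑ s ∈ Finset.range q, (ζ ^ (g * a)) ^ s)
  have step3 : ∏ i ∈ Finset.range m, (∑ s ∈ Finset.range q, (ζ ^ (g * i)) ^ s)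
      = (∏ i ∈ Finset.range d, (∑ s ∈ Finset.range q, (ζ ^ (g * i)) ^ s)) ^ g := by
    have hper : ∀ a : ℕ, (∑ s ∈ Finset.range q, (ζ ^ (g * (a + d))) ^ s)
        = ∑ s ∈ Finset.range q, (ζ ^ (g * a)) ^ s := by
      intro a
      refine Gmod _ _ ?_
      show (g * (a + d)) % m = (g * a) % m
      have : g * (a + d) = g * a + m * 1 := by rw [hmdg]; ring
      rw [this, Nat.add_mul_mod_self_left]
    have := periodic_prod' (fun a => ∑ s ∈ Finset.range q, (ζ ^ (g * a)) ^ s) d hper g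
    rw [show m = d * g from by rw [hmdg, mul_comm]]
    exact this
  have step4 : ∏ i ∈ Finset.range d, (∑ s ∈ Finset.range q, (ζ ^ (g * i)) ^ s)
      = if Nat.gcd d q = 1 then (q : ℂ) else 0 := by
    have hη : IsPrimitiveRoot (ζ ^ g) d := hζ.pow hm hmdg
    have h1 : ∀ i : ℕ, (ζ : ℂ) ^ (g * i) = (ζ ^ g) ^ i := fun i => pow_mul ζ g i
    calc ∏ i ∈ Finset.range d, (∑ s ∈ Finset.range q, (ζ ^ (g * i)) ^ s)
        = ∏ i ∈ Finset.range d, (∑ s ∈ Finset.range q, ((ζ ^ g) ^ i) ^ s) := by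
          refine Finset.prod_congr rfl fun i _ => ?_; rw [h1]
      _ = if Nat.gcd d q = 1 then (q : ℂ) else 0 := prod_H' q d hd0 (ζ ^ g) hη
  rw [step1, step2, step3, step4, ← hgdef, ← hddef]
  by_cases hc : Nat.gcd d q = 1
  · rw [if_pos hc, if_pos hc]
    push_cast
    rfl
  · rw [if_neg hc, if_neg hc]
    rw [Nat.cast_zero, zero_pow hg0.ne']

private lemma sumQ' (q m : ℕ) (hm : 0 < m) :
    ∑ j ∈ Finset.range m, (if Nat.gcd (m / Nat.gcd j m) q = 1 then q ^ Nat.gcd j m else 0) =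
      ∑ d ∈ m.divisors.filter (fun d => Nat.gcd d q = 1), Nat.totient d * q ^ (m / d) := by
  have h1 : ∑ j ∈ Finset.range m,
        (if Nat.gcd (m / Nat.gcd j m) q = 1 then q ^ Nat.gcd j m else 0)
      = ∑ e ∈ m.divisors, ∑ j ∈ (Finset.range m).filter (fun j => Nat.gcd m j = e),
          (if Nat.gcd (m / Nat.gcd j m) q = 1 then q ^ Nat.gcd j m else 0) :=
    (Finset.sum_fiberwise_of_maps_to
      (fun j _ => Nat.mem_divisors.2 ⟨Nat.gcd_dvd_left m j, hm.ne'⟩) _).symm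
  rw [h1]
  have h2 : ∀ e ∈ m.divisors,
      ∑ j ∈ (Finset.range m).filter (fun j => Nat.gcd m j = e),
          (if Nat.gcd (m / Nat.gcd j m) q = 1 then q ^ Nat.gcd j m else 0)
      = Nat.totient (m / e) * (if Nat.gcd (m / e) q = 1 then q ^ e else 0) := by
    intro e he
    have hconst : ∀ j ∈ (Finset.range m).filter (fun j => Nat.gcd m j = e),
        (if Nat.gcd (m / Nat.gcd j m) q = 1 then q ^ Nat.gcd j m else 0)
        = (if Nat.gcd (m / e) q = 1 then q ^ e else 0) := by
      intro j hj
      have hje : Nat.gcd j m = e := by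
        rw [Nat.gcd_comm]; exact (Finset.mem_filter.1 hj).2
      rw [hje]
    rw [Finset.sum_congr rfl hconst, Finset.sum_const, smul_eq_mul]
    congr 1
    exact (Nat.totient_div_of_dvd (Nat.mem_divisors.1 he).1).symm
  rw [Finset.sum_congr rfl h2]
  have h3 : ∑ e ∈ m.divisors, Nat.totient (m / e) * (if Nat.gcd (m / e) q = 1 then q ^ e else 0)
      = ∑ e ∈ m.divisors,
          (fun d => Nat.totient d * (if Nat.gcd d q = 1 then q ^ (m / d) else 0)) (m / e) := by
    refine Finset.sum_congr rfl fun e he => ?_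
    simp only []
    congr 2
    rw [Nat.div_div_self (Nat.mem_divisors.1 he).1 hm.ne']
  rw [h3, Nat.sum_div_divisors m (fun d => Nat.totient d * (if Nat.gcd d q = 1 then q ^ (m / d) else 0))]
  rw [Finset.sum_filter]
  refine Finset.sum_congr rfl fun d _ => ?_
  by_cases hc : Nat.gcd d q = 1 <;> simp [hc]

private lemma orth' {m : ℕ} (hm : 0 < m) {ζ : ℂ} (hζ : IsPrimitiveRoot ζ m) (a : ℤ) :
    ∑ j ∈ Finset.range m, (ζ ^ a) ^ j = if (m : ℤ) ∣ a then (m : ℂ) else 0 := by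
  by_cases h : (m : ℤ) ∣ a
  · rw [if_pos h, (hζ.zpow_eq_one_iff_dvd a).2 h]
    simp
  · rw [if_neg h]
    have hne : (ζ : ℂ) ^ a ≠ 1 := fun hc => h ((hζ.zpow_eq_one_iff_dvd a).1 hc)
    rw [geom_sum_eq hne]
    have : ((ζ : ℂ) ^ a) ^ m = 1 := by
      rw [← zpow_natCast ((ζ : ℂ) ^ a) m, ← zpow_mul, mul_comm, zpow_mul, zpow_natCast,
        hζ.pow_eq_one, one_zpow]
    rw [this, sub_self, zero_div]

private lemma key_eq' (q n : ℕ) (b : ℤ) (ζ : ℂ) (hζ : IsPrimitiveRoot ζ (n + 1)) :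
    (((VTq q n b).card * (q * (n + 1)) : ℕ) : ℂ) =
      ∑ j ∈ Finset.range (n + 1), (ζ ^ (-b)) ^ j *
        ((if Nat.gcd ((n + 1) / Nat.gcd j (n + 1)) q = 1 then q ^ Nat.gcd j (n + 1) else 0 : ℕ) : ℂ) := by
  have hm : 0 < n + 1 := Nat.succ_pos n
  have hζm : ζ ^ (n + 1) = 1 := hζ.pow_eq_one
  have hζ0 : ζ ≠ 0 := hζ.ne_zero hm.ne'
  -- step A
  have hA : (((VTq q n b).card : ℕ) : ℂ) * ((n : ℂ) + 1)
      = ∑ s : Fin n → Fin q,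
          (if (((n : ℤ) + 1) ∣ (∑ i : Fin n, (((i.val + 1) * (s i).val : ℕ) : ℤ)) - b)
            then ((n : ℂ) + 1) else 0) := by
    rw [← Finset.sum_filter, Finset.sum_const, nsmul_eq_mul]
    norm_num [VTq]
  -- step B : orthogonality
  have hB : ∀ s : Fin n → Fin q,
      (if (((n : ℤ) + 1) ∣ (∑ i : Fin n, (((i.val + 1) * (s i).val : ℕ) : ℤ)) - b)
        then ((n : ℂ) + 1) else 0)
      = ∑ j ∈ Finset.range (n + 1),
          (ζ ^ ((∑ i : Fin n, (((i.val + 1) * (s i).val : ℕ) : ℤ)) - b)) ^ j := by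
    intro s
    rw [orth' hm hζ]
    push_cast
    rfl
  -- step C : per (j, s) factorization
  have hC : ∀ j : ℕ, ∀ s : Fin n → Fin q,
      (ζ ^ ((∑ i : Fin n, (((i.val + 1) * (s i).val : ℕ) : ℤ)) - b)) ^ j
      = (ζ ^ (-b)) ^ j * ∏ i : Fin n, (ζ ^ (j * (i.val + 1))) ^ (s i).val := by
    intro j s
    have hcast : (∑ i : Fin n, (((i.val + 1) * (s i).val : ℕ) : ℤ))
        = ((∑ i : Fin n, ((i.val + 1) * (s i).val) : ℕ) : ℤ) := by
      push_cast
      rfl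
    have e1 : (ζ : ℂ) ^ ((∑ i : Fin n, (((i.val + 1) * (s i).val : ℕ) : ℤ)) - b)
        = ζ ^ (∑ i : Fin n, ((i.val + 1) * (s i).val) : ℕ) * ζ ^ (-b) := by
      rw [hcast, sub_eq_add_neg, zpow_add₀ hζ0, zpow_natCast]
    rw [e1, mul_pow, mul_comm]
    congr 1
    rw [← pow_mul]
    have e2 : (∑ i : Fin n, ((i.val + 1) * (s i).val)) * j
        = ∑ i : Fin n, j * (i.val + 1) * (s i).val := by
      rw [Finset.sum_mul]
      exact Finset.sum_congr rfl fun i _ => by ring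
    rw [e2, ← Finset.prod_pow_eq_pow_sum]
    exact Finset.prod_congr rfl fun i _ => pow_mul ζ _ _
  -- step D : sum over s of product = product of sums
  have hD : ∀ j : ℕ,
      ∑ s : Fin n → Fin q, ∏ i : Fin n, (ζ ^ (j * (i.val + 1))) ^ (s i).val
      = ∏ i ∈ Finset.range n, (∑ t ∈ Finset.range q, (ζ ^ (j * (i + 1))) ^ t) := by
    intro j
    rw [← Fintype.piFinset_univ,
      ← Finset.prod_univ_sum (fun _ : Fin n => (Finset.univ : Finset (Fin q)))
        (fun i t => (ζ ^ (j * (i.val + 1))) ^ t.val)]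
    rw [← Fin.prod_univ_eq_prod_range (fun i => ∑ t ∈ Finset.range q, (ζ ^ (j * (i + 1))) ^ t) n]
    exact Finset.prod_congr rfl fun i _ =>
      (Fin.sum_univ_eq_sum_range (fun t => (ζ ^ (j * (i.val + 1))) ^ t) q)
  -- step E : extend product over range (n+1)
  have hE : ∀ j : ℕ,
      ∏ i ∈ Finset.range (n + 1), (∑ t ∈ Finset.range q, (ζ ^ (j * i)) ^ t)
      = (∏ i ∈ Finset.range n, (∑ t ∈ Finset.range q, (ζ ^ (j * (i + 1))) ^ t)) * (q : ℂ) := by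
    intro j
    rw [Finset.prod_range_succ']
    congr 1
    simp
  -- assemble
  rw [Nat.cast_mul, Nat.cast_mul, Nat.cast_add, Nat.cast_one]
  calc ((VTq q n b).card : ℂ) * ((q : ℂ) * ((n : ℂ) + 1))
      = (q : ℂ) * (((VTq q n b).card : ℂ) * ((n : ℂ) + 1)) := by ring
    _ = (q : ℂ) * ∑ s : Fin n → Fin q, ∑ j ∈ Finset.range (n + 1),
          (ζ ^ ((∑ i : Fin n, (((i.val + 1) * (s i).val : ℕ) : ℤ)) - b)) ^ j := by
        rw [hA, Finset.sum_congr rfl fun s _ => hB s]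
    _ = (q : ℂ) * ∑ j ∈ Finset.range (n + 1), ∑ s : Fin n → Fin q,
          (ζ ^ ((∑ i : Fin n, (((i.val + 1) * (s i).val : ℕ) : ℤ)) - b)) ^ j := by
        rw [Finset.sum_comm]
    _ = ∑ j ∈ Finset.range (n + 1), (ζ ^ (-b)) ^ j *
          ((∏ i ∈ Finset.range n, (∑ t ∈ Finset.range q, (ζ ^ (j * (i + 1))) ^ t)) * (q : ℂ)) := by
        rw [Finset.mul_sum]
        refine Finset.sum_congr rfl fun j _ => ?_
        rw [Finset.sum_congr rfl fun s _ => hC j s, ← Finset.mul_sum, hD j]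
        ring
    _ = ∑ j ∈ Finset.range (n + 1), (ζ ^ (-b)) ^ j *
          ((if Nat.gcd ((n + 1) / Nat.gcd j (n + 1)) q = 1 then q ^ Nat.gcd j (n + 1) else 0 : ℕ) : ℂ) := by
        refine Finset.sum_congr rfl fun j _ => ?_
        rw [← hE j, prod_G' q (n + 1) hm ζ hζ j]

theorem stmt_16 (q n : ℕ) (hq : 1 ≤ q) (hn : 1 ≤ n) (b : ℤ) :
    (VTq q n b).card ≤ (VTq q n 0).card ∧
      ((VTq q n 0).card : ℂ) =
        (1 / (q * (n + 1))) *
          ∑ d ∈ (n + 1).divisors.filter (fun d => Nat.gcd d q = 1),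
            (Nat.totient d : ℂ) * q ^ ((n + 1) / d) := by
  have hm : 0 < n + 1 := Nat.succ_pos n
  set ζ : ℂ := Complex.exp (2 * Real.pi * Complex.I / (n + 1)) with hζdef
  have hζ : IsPrimitiveRoot ζ (n + 1) := by
    have := Complex.isPrimitiveRoot_exp (n + 1) hm.ne'
    simpa [hζdef] using this
  have hζnorm : ‖ζ‖ = 1 := hζ.norm'_eq_one hm.ne'
  -- Q nat values
  set Q : ℕ → ℕ := fun j =>
    if Nat.gcd ((n + 1) / Nat.gcd j (n + 1)) q = 1 then q ^ Nat.gcd j (n + 1) else 0 with hQ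
  -- b = 0 identity in ℕ
  have h0 := key_eq' q n 0 ζ hζ
  have h0' : (((VTq q n 0).card * (q * (n + 1)) : ℕ) : ℂ)
      = ((∑ j ∈ Finset.range (n + 1), Q j : ℕ) : ℂ) := by
    rw [h0]
    rw [Nat.cast_sum]
    refine Finset.sum_congr rfl fun j _ => ?_
    simp [hQ]
  have h0nat : (VTq q n 0).card * (q * (n + 1)) = ∑ j ∈ Finset.range (n + 1), Q j :=
    Nat.cast_injective h0'
  -- inequality
  have hb := key_eq' q n b ζ hζ
  have hineq : ((VTq q n b).card * (q * (n + 1)) : ℕ) ≤ ∑ j ∈ Finset.range (n + 1), Q j := by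
    have hreal : (((VTq q n b).card * (q * (n + 1)) : ℕ) : ℝ)
        ≤ ((∑ j ∈ Finset.range (n + 1), Q j : ℕ) : ℝ) := by
      calc (((VTq q n b).card * (q * (n + 1)) : ℕ) : ℝ)
          = ‖(((VTq q n b).card * (q * (n + 1)) : ℕ) : ℂ)‖ := by
            rw [Complex.norm_natCast]
        _ = ‖∑ j ∈ Finset.range (n + 1), (ζ ^ (-b)) ^ j * ((Q j : ℕ) : ℂ)‖ := by rw [hb]
        _ ≤ ∑ j ∈ Finset.range (n + 1), ‖(ζ ^ (-b)) ^ j * ((Q j : ℕ) : ℂ)‖ :=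
            norm_sum_le _ _
        _ = ∑ j ∈ Finset.range (n + 1), ((Q j : ℕ) : ℝ) := by
            refine Finset.sum_congr rfl fun j _ => ?_
            rw [norm_mul, norm_pow, norm_zpow, hζnorm, one_zpow, one_pow, one_mul,
              Complex.norm_natCast]
        _ = ((∑ j ∈ Finset.range (n + 1), Q j : ℕ) : ℝ) := by rw [Nat.cast_sum]
    exact_mod_cast hreal
  have hqm : 0 < q * (n + 1) := Nat.mul_pos hq hm
  constructor
  · rw [← h0nat] at hineq
    exact Nat.le_of_mul_le_mul_right hineq hqm
  · -- formula
    have hsum := sumQ' q (n + 1) hm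
    rw [hsum] at h0nat
    have hC : (((VTq q n 0).card * (q * (n + 1)) : ℕ) : ℂ)
        = ((∑ d ∈ (n + 1).divisors.filter (fun d => Nat.gcd d q = 1),
            Nat.totient d * q ^ ((n + 1) / d) : ℕ) : ℂ) := by
      rw [h0nat]
    push_cast at hC
    have hne : ((q : ℂ) * ((n : ℂ) + 1)) ≠ 0 := by
      apply mul_ne_zero
      · exact Nat.cast_ne_zero.2 (by omega)
      · have : ((n : ℂ) + 1) = ((n + 1 : ℕ) : ℂ) := by push_cast; ring
        rw [this]
        exact_mod_cast hm.ne'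
    rw [one_div, inv_mul_eq_div, eq_div_iff hne]
    calc ((VTq q n 0).card : ℂ) * ((q : ℂ) * ((n : ℂ) + 1))
        = ∑ d ∈ (n + 1).divisors.filter (fun d => Nat.gcd d q = 1),
            (Nat.totient d : ℂ) * (q : ℂ) ^ ((n + 1) / d) := by
          convert hC using 2 <;> push_cast <;> ring
      _ = _ := rfl
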